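/- The interaction term appearing in the derivation of the BMR bracket is given by the following vortex-bracket computation: let f(X) = Σ_{i=1}^N Γ_i Y_i (R²/(X_i² + Y_i²) − 1) and g(X) = Σ_{i=1}^N Γ_i X_i (1 − R²/(X_i² + Y_i²)) on the open set where (X_i, Y_i) ≠ (0, 0) for all i. Then {f, g}_vortex = Σ_{i=1}^N Γ_i ((X_i² + Y_i²)² − R⁴)/(X_i² + Y_i²)² at every point of that set. -/

import Mathlib

/-!
Both `f` and `g` are sums of one-vortex terms `Γ_i φ(X_i, Y_i)` and `Γ_i ψ(X_i, Y_i)`, so the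
vortex bracket decouples into `Σ_i (1/Γ_i) Γ_i² {φ, ψ}(X_i, Y_i)` with the planar bracket
`{φ, ψ} = φ_x ψ_y − ψ_x φ_y`. Writing `u = R²/(x² + y²)`, we have `φ = y (u − 1)` and
`ψ = x (1 − u)`, and the product rule gives `{φ, ψ} = (1 − u)² − (1 − u)(x u_x + y u_y)`.
Since `u` is homogeneous of degree `−2`, Euler's identity `x u_x + y u_y = −2u` turns this into
`1 − u² = ((x² + y²)² − R⁴)/(x² + y²)²`.
-/

open scoped BigOperators

noncomputable section

variable {N : ℕ}

/-- `∂f/∂X_i` on the vortex space `ℝ^{2N} = (ℝ²)^N`. -/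
def vdX (i : Fin N) (f : (Fin N → ℝ × ℝ) → ℝ) (q : Fin N → ℝ × ℝ) : ℝ :=
  fderiv ℝ f q (Pi.single i (1, 0))

/-- `∂f/∂Y_i` on the vortex space. -/
def vdY (i : Fin N) (f : (Fin N → ℝ × ℝ) → ℝ) (q : Fin N → ℝ × ℝ) : ℝ :=
  fderiv ℝ f q (Pi.single i (0, 1))

/-- The vortex Poisson bracket
`{f, g}_vortex = Σ_i (1/Γ_i)(∂f/∂X_i ∂g/∂Y_i − ∂g/∂X_i ∂f/∂Y_i)`. -/
def vortexBracket (Γ : Fin N → ℝ) (f g : (Fin N → ℝ × ℝ) → ℝ)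
    (q : Fin N → ℝ × ℝ) : ℝ :=
  ∑ i, (1 / Γ i) * (vdX i f q * vdY i g q - vdX i g q * vdY i f q)

theorem fderiv_sum_apply_single {𝕜 ι E F : Type*} [NontriviallyNormedField 𝕜] [Fintype ι]
    [DecidableEq ι] [NormedAddCommGroup E] [NormedSpace 𝕜 E] [NormedAddCommGroup F]
    [NormedSpace 𝕜 F] {f : ι → E → F} {q : ι → E} (hf : ∀ j, DifferentiableAt 𝕜 (f j) (q j))
    (i : ι) (v : E) :
    fderiv 𝕜 (fun X : ι → E => ∑ j, f j (X j)) q (Pi.single i v) = fderiv 𝕜 (f i) (q i) v := by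
  have hsum : HasFDerivAt (fun X : ι → E => ∑ j, f j (X j))
      (∑ j, (fderiv 𝕜 (f j) (q j)).comp (ContinuousLinearMap.proj j)) q :=
    HasFDerivAt.fun_sum fun j _ => (hf j).hasFDerivAt.comp q (hasFDerivAt_apply j q)
  rw [hsum.fderiv, sum_apply, Finset.sum_eq_single i]
  · simp
  · intro j _ hj
    simp [Pi.single_eq_of_ne hj]
  · simp

def planarBracket (f g : ℝ × ℝ → ℝ) (p : ℝ × ℝ) : ℝ :=
  fderiv ℝ f p (1, 0) * fderiv ℝ g p (0, 1) - fderiv ℝ g p (1, 0) * fderiv ℝ f p (0, 1)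

theorem vortexBracket_sum_apply (Γ : Fin N → ℝ) {f g : Fin N → ℝ × ℝ → ℝ} {q : Fin N → ℝ × ℝ}
    (hf : ∀ j, DifferentiableAt ℝ (f j) (q j)) (hg : ∀ j, DifferentiableAt ℝ (g j) (q j)) :
    vortexBracket Γ (fun X => ∑ j, f j (X j)) (fun X => ∑ j, g j (X j)) q
      = ∑ i, 1 / Γ i * planarBracket (f i) (g i) (q i) := by
  simp only [vortexBracket, vdX, vdY, planarBracket, fderiv_sum_apply_single hf,
    fderiv_sum_apply_single hg]

theorem planarBracket_mul_snd_mul_fst (c : ℝ) {u : ℝ × ℝ → ℝ} {D : ℝ × ℝ →L[ℝ] ℝ}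
    {p : ℝ × ℝ} (hu : HasFDerivAt u D p) :
    planarBracket (fun p => c * p.2 * (u p - 1)) (fun p => c * p.1 * (1 - u p)) p
      = c ^ 2 * ((1 - u p) ^ 2 - (1 - u p) * D p) := by
  have hf := ((hasFDerivAt_snd.const_mul c).fun_mul (hu.sub_const 1)).fderiv
  have hg := ((hasFDerivAt_fst.const_mul c).fun_mul (hu.const_sub 1)).fderiv
  have hDp : D p = p.1 * D (1, 0) + p.2 * D (0, 1) := by
    have hbasis : p = p.1 • ((1 : ℝ), (0 : ℝ)) + p.2 • ((0 : ℝ), (1 : ℝ)) := by ext <;> simp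
    conv_lhs => rw [hbasis]
    rw [map_add, map_smul, map_smul, smul_eq_mul, smul_eq_mul]
  simp only [planarBracket, hf, hg, hDp]
  simp only [add_apply, smul_apply, smul_eq_mul, ContinuousLinearMap.coe_snd', mul_zero, add_zero,
    smul_neg, neg_apply, ContinuousLinearMap.coe_fst', mul_neg, mul_one]
  ring

theorem fst_sq_add_snd_sq_ne_zero {p : ℝ × ℝ} (hp : p ≠ (0, 0)) : p.1 ^ 2 + p.2 ^ 2 ≠ 0 := by
  contrapose! hp
  obtain ⟨hx, hy⟩ := (add_eq_zero_iff_of_nonneg (sq_nonneg p.1) (sq_nonneg p.2)).1 hp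
  exact Prod.ext (eq_zero_of_pow_eq_zero hx) (eq_zero_of_pow_eq_zero hy)

theorem differentiableAt_sq_div_normSq (R : ℝ) {p : ℝ × ℝ} (hp : p.1 ^ 2 + p.2 ^ 2 ≠ 0) :
    DifferentiableAt ℝ (fun p : ℝ × ℝ => R ^ 2 / (p.1 ^ 2 + p.2 ^ 2)) p := by
  fun_prop (disch := exact hp)

theorem fderiv_sq_div_normSq_apply_self (R : ℝ) {p : ℝ × ℝ} (hp : p.1 ^ 2 + p.2 ^ 2 ≠ 0) :
    fderiv ℝ (fun p : ℝ × ℝ => R ^ 2 / (p.1 ^ 2 + p.2 ^ 2)) p p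
      = -2 * (R ^ 2 / (p.1 ^ 2 + p.2 ^ 2)) := by
  have hx : HasFDerivAt (fun p : ℝ × ℝ => p.1 ^ 2) _ p :=
    (hasFDerivAt_fst (𝕜 := ℝ) (E := ℝ) (F := ℝ)).pow 2
  have hy : HasFDerivAt (fun p : ℝ × ℝ => p.2 ^ 2) _ p :=
    (hasFDerivAt_snd (𝕜 := ℝ) (E := ℝ) (F := ℝ)).pow 2
  have h := ((hasDerivAt_inv hp).const_mul (R ^ 2)).comp_hasFDerivAt p (hx.fun_add hy)
  simp only [div_eq_mul_inv]
  rw [HasFDerivAt.fderiv (f := fun p : ℝ × ℝ => R ^ 2 * (p.1 ^ 2 + p.2 ^ 2)⁻¹) h]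
  simp only [mul_neg, Nat.add_one_sub_one, pow_one, nsmul_eq_mul, Nat.cast_ofNat, smul_add,
    neg_smul, add_apply, neg_apply, smul_apply, ContinuousLinearMap.coe_fst', smul_eq_mul,
    ContinuousLinearMap.coe_snd', neg_mul]
  field_simp
  ring

theorem planarBracket_interaction (c R : ℝ) {p : ℝ × ℝ} (hp : p.1 ^ 2 + p.2 ^ 2 ≠ 0) :
    planarBracket (fun p => c * p.2 * (R ^ 2 / (p.1 ^ 2 + p.2 ^ 2) - 1))
      (fun p => c * p.1 * (1 - R ^ 2 / (p.1 ^ 2 + p.2 ^ 2))) p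
      = c ^ 2 * (((p.1 ^ 2 + p.2 ^ 2) ^ 2 - R ^ 4) / (p.1 ^ 2 + p.2 ^ 2) ^ 2) := by
  rw [planarBracket_mul_snd_mul_fst c (differentiableAt_sq_div_normSq R hp).hasFDerivAt,
    fderiv_sq_div_normSq_apply_self R hp]
  field_simp
  ring

theorem interaction_term_vortex_bracket_general {N : ℕ}
    (Γ : Fin N → ℝ) (R : ℝ)
    (q : Fin N → ℝ × ℝ) (hq : ∀ i, q i ≠ (0, 0)) :
    vortexBracket Γ
      (fun X => ∑ i, Γ i * (X i).2 * (R ^ 2 / ((X i).1 ^ 2 + (X i).2 ^ 2) - 1))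
      (fun X => ∑ i, Γ i * (X i).1 * (1 - R ^ 2 / ((X i).1 ^ 2 + (X i).2 ^ 2)))
      q
      = ∑ i, Γ i * (((q i).1 ^ 2 + (q i).2 ^ 2) ^ 2 - R ^ 4)
          / ((q i).1 ^ 2 + (q i).2 ^ 2) ^ 2 := by
  have hs : ∀ i, (q i).1 ^ 2 + (q i).2 ^ 2 ≠ 0 := fun i => fst_sq_add_snd_sq_ne_zero (hq i)
  rw [vortexBracket_sum_apply Γ (f := fun j p => Γ j * p.2 * (R ^ 2 / (p.1 ^ 2 + p.2 ^ 2) - 1))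
    (g := fun j p => Γ j * p.1 * (1 - R ^ 2 / (p.1 ^ 2 + p.2 ^ 2)))
    (fun j => by fun_prop (disch := exact hs j)) (fun j => by fun_prop (disch := exact hs j))]
  refine Finset.sum_congr rfl fun i _ => ?_
  rw [planarBracket_interaction (Γ i) R (hs i), one_div, ← mul_assoc, pow_two, ← mul_assoc,
    inv_mul_mul_self, mul_div_assoc]

/-- With `f(X) = Σ_i Γ_i Y_i (R²/(X_i² + Y_i²) − 1)` and
`g(X) = Σ_i Γ_i X_i (1 − R²/(X_i² + Y_i²))`, the vortex bracket is
`{f, g}_vortex = Σ_i Γ_i ((X_i² + Y_i²)² − R⁴)/(X_i² + Y_i²)²` at every point where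
no vortex sits at the origin. -/
theorem interaction_term_vortex_bracket {N : ℕ} (hN : 1 ≤ N)
    (Γ : Fin N → ℝ) (hΓ : ∀ i, Γ i ≠ 0) (R : ℝ) (hR : 0 < R)
    (q : Fin N → ℝ × ℝ) (hq : ∀ i, q i ≠ (0, 0)) :
    vortexBracket Γ
      (fun X => ∑ i, Γ i * (X i).2 * (R ^ 2 / ((X i).1 ^ 2 + (X i).2 ^ 2) - 1))
      (fun X => ∑ i, Γ i * (X i).1 * (1 - R ^ 2 / ((X i).1 ^ 2 + (X i).2 ^ 2)))
      q
      = ∑ i, Γ i * (((q i).1 ^ 2 + (q i).2 ^ 2) ^ 2 - R ^ 4)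
          / ((q i).1 ^ 2 + (q i).2 ^ 2) ^ 2 :=
  interaction_term_vortex_bracket_general Γ R q hq

end
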